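/- arXiv:2211.07151 — 4 statements merged into one kernel-verified Lean document; each statement's English description precedes it below -/
import Mathlib

section
/- Let m ≥ 1 and let a_0, a_1, …, a_m be real numbers. Set e_m = max{ |a_i − a_{i−1}| : i = 1, …, m }. Let σ be a permutation of {0, 1, …, m} such that a_{σ(0)} ≤ a_{σ(1)} ≤ … ≤ a_{σ(m)}, and set d_m = max{ a_{σ(i)} − a_{σ(i−1)} : i = 1, …, m }. Then d_m ≤ e_m. -/
/-!
Let `L = a (σ i)` and `H = a (σ (i + 1))`. Since the values are sorted, no `a k` lies strictly
between `L` and `H`. Walking along the original order from index `σ i` (value `≤ L`) to index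
`σ (i + 1)` (value `≥ H`), some step must jump across the gap, and that step has
`|a (j + 1) - a j| ≥ H - L`.
-/

theorem Fin.exists_castSucc_iff_not_succ {n : ℕ} {p : Fin (n + 1) → Prop} {u v : Fin (n + 1)}
    (hu : p u) (hv : ¬ p v) : ∃ j : Fin n, (p j.castSucc ↔ ¬ p j.succ) := by
  by_contra! h
  have hconst : ∀ k, p k ↔ p 0 := fun k => by
    induction k using Fin.induction with
    | zero => rfl
    | succ j ih => have := h j; tauto
  exact hv ((hconst v).mpr ((hconst u).mp hu))

theorem Monotone.le_castSucc_or_succ_le {n : ℕ} {α : Type*} [Preorder α]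
    {g : Fin (n + 1) → α} (hg : Monotone g) (i : Fin n) (k : Fin (n + 1)) :
    g k ≤ g i.castSucc ∨ g i.succ ≤ g k := by
  rcases le_or_gt k i.castSucc with hk | hk
  · exact .inl (hg hk)
  · exact .inr (hg (Fin.castSucc_lt_iff_succ_le.mp hk))

theorem Fin.exists_sub_le_abs_sub_of_forall_le_or_le {n : ℕ} {α : Type*} [AddCommGroup α]
    [LinearOrder α] [IsOrderedAddMonoid α] {f : Fin (n + 1) → α} {L H : α} (hLH : L < H)
    (hgap : ∀ k, f k ≤ L ∨ H ≤ f k) {u v : Fin (n + 1)} (hu : f u ≤ L) (hv : H ≤ f v) :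
    ∃ j : Fin n, H - L ≤ |f j.succ - f j.castSucc| := by
  obtain ⟨j, hj⟩ :=
    Fin.exists_castSucc_iff_not_succ (p := fun k => f k ≤ L) hu (not_le.mpr (hLH.trans_le hv))
  refine ⟨j, ?_⟩
  by_cases hc : f j.castSucc ≤ L
  · have hs : H ≤ f j.succ := (hgap _).resolve_left (hj.mp hc)
    calc H - L ≤ f j.succ - f j.castSucc := sub_le_sub hs hc
      _ ≤ _ := le_abs_self _
  · have hs : f j.succ ≤ L := not_not.mp (mt hj.mpr hc)
    calc H - L ≤ f j.castSucc - f j.succ := sub_le_sub ((hgap _).resolve_left hc) hs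
      _ ≤ _ := (le_abs_self _).trans_eq (abs_sub_comm _ _)

/-- For real numbers `a 0, …, a m` (`m ≥ 1`), if `σ` is a permutation of
`{0, …, m}` sorting the values (`a (σ 0) ≤ … ≤ a (σ m)`), then the largest gap between
consecutive sorted values is at most the largest absolute difference between consecutive
values in the original order. -/
theorem stmt_0 (m : ℕ) (hm : 1 ≤ m) (a : Fin (m + 1) → ℝ)
    (σ : Equiv.Perm (Fin (m + 1)))
    (hσ : Monotone fun i => a (σ i)) :
    Finset.univ.sup' (Finset.univ_nonempty_iff.mpr ⟨⟨0, hm⟩⟩)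
        (fun i : Fin m => a (σ i.succ) - a (σ i.castSucc)) ≤
      Finset.univ.sup' (Finset.univ_nonempty_iff.mpr ⟨⟨0, hm⟩⟩)
        (fun i : Fin m => |a i.succ - a i.castSucc|) := by
  refine Finset.sup'_le _ _ fun i _ => ?_
  rcases le_or_gt (a (σ i.succ)) (a (σ i.castSucc)) with hle | hlt
  · exact (sub_nonpos.mpr hle).trans
      (Finset.le_sup'_of_le _ (Finset.mem_univ ⟨0, hm⟩) (abs_nonneg _))
  have hgap : ∀ k, a k ≤ a (σ i.castSucc) ∨ a (σ i.succ) ≤ a k := fun k => by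
    simpa using hσ.le_castSucc_or_succ_le i (σ.symm k)
  obtain ⟨j, hj⟩ := Fin.exists_sub_le_abs_sub_of_forall_le_or_le hlt hgap le_rfl le_rfl
  exact Finset.le_sup'_of_le _ (Finset.mem_univ j) hj
end

section
/- Let a < b be real numbers and let f : [a, b] → ℝ be continuous. For each n ≥ 1 set y_i^{(n)} = f(a + i·(b−a)/n) for i = 0, 1, …, n. Then for every ε > 0 there exists N ∈ ℕ such that for all n > N and every permutation σ of {0, 1, …, n} with y_{σ(0)}^{(n)} ≤ y_{σ(1)}^{(n)} ≤ … ≤ y_{σ(n)}^{(n)}, one has max{ y_{σ(i)}^{(n)} − y_{σ(i−1)}^{(n)} : i = 1, …, n } < ε. In other words, the largest gap between consecutive order statistics of the sample values f(a + i(b−a)/n) tends to 0 as n → ∞. -/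
/-!
Adjacent samples `y k`, `y (k + 1)` differ by less than `ε` once `n` is large, by uniform
continuity of `f` on `[a, b]`. A gap `s < t` between consecutive order statistics splits the
nodes into those with `y ≤ s` and those with `y ≥ t`; both classes are nonempty, so walking
along the nodes some adjacent pair crosses from one class to the other, and its difference is
at least `t - s`.
-/

open Set

lemma equidistant_node_mem_Icc {a b : ℝ} (hab : a ≤ b) {n k : ℕ} (hk : k ≤ n) :
    a + (k : ℝ) * (b - a) / n ∈ Icc a b := by
  rcases Nat.eq_zero_or_pos n with rfl | -
  · simp [hab]
  have hkn : (k : ℝ) / n ≤ 1 := div_le_one_of_le₀ (by exact_mod_cast hk) n.cast_nonneg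
  have hk₀ : (0 : ℝ) ≤ k / n := by positivity
  have hnode : (k : ℝ) * (b - a) / n = k / n * (b - a) := by ring
  rw [hnode]
  constructor <;> nlinarith

lemma equidistant_node_succ_sub (a b : ℝ) (n k : ℕ) :
    a + ((k + 1 : ℕ) : ℝ) * (b - a) / n - (a + (k : ℝ) * (b - a) / n) = (b - a) / n := by
  push_cast
  ring

lemma exists_abs_sample_step_lt {a b : ℝ} (hab : a ≤ b) {f : ℝ → ℝ}
    (hf : ContinuousOn f (Icc a b)) {ε : ℝ} (hε : 0 < ε) :
    ∃ N : ℕ, ∀ n > N, ∀ k < n,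
      |f (a + ((k + 1 : ℕ) : ℝ) * (b - a) / n) - f (a + (k : ℝ) * (b - a) / n)| < ε := by
  obtain ⟨δ, hδ, hδf⟩ :=
    Metric.uniformContinuousOn_iff.mp (isCompact_Icc.uniformContinuousOn_of_continuous hf) ε hε
  refine ⟨⌈(b - a) / δ⌉₊, fun n hn k hk => ?_⟩
  have hn₀ : (0 : ℝ) < n := by exact_mod_cast (Nat.zero_le _).trans_lt hn
  have hmesh : (b - a) / n < δ :=
    (div_lt_comm₀ hδ hn₀).mp ((Nat.le_ceil _).trans_lt (by exact_mod_cast hn))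
  rw [← Real.dist_eq]
  refine hδf _ (equidistant_node_mem_Icc hab hk) _ (equidistant_node_mem_Icc hab hk.le) ?_
  rwa [Real.dist_eq, equidistant_node_succ_sub, abs_of_nonneg (by positivity)]

lemma exists_sub_le_abs_step_of_separated {y : ℕ → ℝ} {n u v : ℕ} {s t : ℝ} (hst : s < t)
    (hsplit : ∀ m ≤ n, y m ≤ s ∨ t ≤ y m) (hu : u ≤ n) (hv : v ≤ n)
    (hyu : y u ≤ s) (hyv : t ≤ y v) :
    ∃ k < n, t - s ≤ |y (k + 1) - y k| := by
  by_contra! hsmall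
  -- with all steps shorter than `t - s`, no step leaves the class `y ≤ s` or enters it
  have hconst : ∀ m ≤ n, (y m ≤ s ↔ y 0 ≤ s) := by
    intro m hm
    induction m with
    | zero => rfl
    | succ m ih =>
      rw [← ih (by omega)]
      have hstep := abs_lt.mp (hsmall m (by omega))
      constructor <;> intro h
      · rcases hsplit m (by omega) with h' | h' <;> first | exact h' | linarith
      · rcases hsplit (m + 1) hm with h' | h' <;> first | exact h' | linarith
  linarith [(hconst v hv).mpr ((hconst u hu).mp hyu)]

lemma le_or_le_of_monotone_comp_perm {α : Type*} [LinearOrder α] {n : ℕ} {g : Fin (n + 1) → α}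
    {σ : Equiv.Perm (Fin (n + 1))} (hσ : Monotone (g ∘ σ)) (i : Fin n) (m : Fin (n + 1)) :
    g m ≤ g (σ i.castSucc) ∨ g (σ i.succ) ≤ g m := by
  rcases le_or_gt (σ.symm m) i.castSucc with h | h
  · left
    simpa using hσ h
  · right
    simpa using hσ (Fin.castSucc_lt_iff_succ_le.mp h)

/-- For `f` continuous on `[a, b]` (`a < b`) and equidistant samples
`y i = f (a + i (b-a)/n)`, the largest gap between consecutive order statistics of the
sample values tends to `0` as `n → ∞`: for every `ε > 0` there is `N` such that for every
`n > N` and every sorting permutation `σ` of the values, all consecutive sorted gaps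
are `< ε`. -/
theorem stmt_1 (a b : ℝ) (hab : a < b) (f : ℝ → ℝ)
    (hf : ContinuousOn f (Set.Icc a b)) :
    ∀ ε > 0, ∃ N : ℕ, ∀ n : ℕ, ∀ hn : N < n,
      ∀ σ : Equiv.Perm (Fin (n + 1)),
        (Monotone fun i => f (a + ((σ i : ℕ) : ℝ) * (b - a) / (n : ℝ))) →
        Finset.univ.sup'
            (Finset.univ_nonempty_iff.mpr ⟨⟨0, Nat.lt_of_le_of_lt (Nat.zero_le N) hn⟩⟩)
            (fun i : Fin n =>
              f (a + ((σ i.succ : ℕ) : ℝ) * (b - a) / (n : ℝ)) -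
                f (a + ((σ i.castSucc : ℕ) : ℝ) * (b - a) / (n : ℝ))) < ε := by
  intro ε hε
  obtain ⟨N, hN⟩ := exists_abs_sample_step_lt hab.le hf hε
  refine ⟨N, fun n hn σ hσ => (Finset.sup'_lt_iff _).mpr fun i _ => ?_⟩
  set y : ℕ → ℝ := fun m => f (a + (m : ℝ) * (b - a) / n)
  by_contra! hgap
  have hsplit : ∀ m ≤ n, y m ≤ y (σ i.castSucc) ∨ y (σ i.succ) ≤ y m := fun m hm =>
    le_or_le_of_monotone_comp_perm (g := fun j : Fin (n + 1) => y j) hσ i ⟨m, by omega⟩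
  obtain ⟨k, hk, hstep⟩ := exists_sub_le_abs_step_of_separated (by linarith) hsplit
    (Nat.lt_succ_iff.mp (σ i.castSucc).isLt) (Nat.lt_succ_iff.mp (σ i.succ).isLt) le_rfl le_rfl
  exact (hN n hn k hk).not_ge (hgap.trans hstep)
end

section
/- Let a < b, let f : [a, b] → ℝ be continuous and strictly increasing, and fix n ≥ 1. With x_i^{(n)} = a + i(b−a)/n, y_i^{(n)} = f(x_i^{(n)}), c = f(a), d = f(b), the hat functions A_i^{(n)}, B_i^{(n)}, R_n(x, y) = max_{0≤i≤n} A_i^{(n)}(x)·B_i^{(n)}(y), and E_n(x) = (∫_c^d y·R_n(x, y) dy)/(∫_c^d R_n(x, y) dy), one has for every x ∈ [a, b]: |E_n(x) − f(x)| ≤ 3 · max{ y_i^{(n)} − y_{i−1}^{(n)} : i = 1, …, n }. -/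
open scoped Classical

/-- The equidistant node `x_i^{(n)} = a + i (b-a)/n` of `[a, b]`. -/
noncomputable def nodes (a b : ℝ) (n i : ℕ) : ℝ := a + (i : ℝ) * (b - a) / (n : ℝ)

/-- The triangular hat function `A_i^{(n)}(x) = max (0, 1 - (n/(b-a)) |x - x_i^{(n)}|)`. -/
noncomputable def hatA (a b : ℝ) (n i : ℕ) (x : ℝ) : ℝ :=
  max 0 (1 - ((n : ℝ) / (b - a)) * |x - nodes a b n i|)

/-- The hat function `B_i^{(n)}` at the strictly increasing nodes `y 0 < y 1 < … < y n`:
it rises linearly from `y (i-1)` to `y i`, falls linearly from `y i` to `y (i+1)`, and is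
`0` otherwise; for `i = 0` only the falling piece is present and for `i = n` only the
rising piece is present. -/
noncomputable def hatB (n : ℕ) (y : ℕ → ℝ) (i : ℕ) (t : ℝ) : ℝ :=
  if i ≠ 0 ∧ y (i - 1) ≤ t ∧ t ≤ y i then (t - y (i - 1)) / (y i - y (i - 1))
  else if i ≠ n ∧ y i ≤ t ∧ t ≤ y (i + 1) then (y (i + 1) - t) / (y (i + 1) - y i)
  else 0

/-- The joint membership function `R_n(x, t) = max_{0 ≤ i ≤ n} A_i^{(n)}(x) B_i^{(n)}(t)`. -/
noncomputable def Rfun (a b : ℝ) (n : ℕ) (y : ℕ → ℝ) (x t : ℝ) : ℝ :=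
  (Finset.range (n + 1)).sup' Finset.nonempty_range_add_one
    (fun i => hatA a b n i x * hatB n y i t)

/-! If `R_n(x, t) > 0`, then `A_i(x) > 0` and `B_i(t) > 0` for one index `i`. The first puts `x`
between the nodes `x_{i-1}` and `x_{i+1}`, hence `f x` between `y_{i-1}` and `y_{i+1}`; the second
puts `t` in the same interval. So `|t - f x|` is at most two gaps wherever the weight `R_n(x, ·)` is
positive, and `E_n(x)`, a weighted average of `t`, inherits the bound. The weight has positive
integral because some `A_j(x)` is positive and `B_j` is positive next to `y_j`. -/

open Set MeasureTheory

lemma abs_integral_mul_div_integral_sub_le {g : ℝ → ℝ} {c d v δ : ℝ} (hcd : c ≤ d)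
    (hg : IntervalIntegrable g volume c d) (hg0 : ∀ t ∈ Icc c d, 0 ≤ g t)
    (hpos : 0 < ∫ t in c..d, g t) (hδ : ∀ t ∈ Icc c d, 0 < g t → |t - v| ≤ δ) :
    |(∫ t in c..d, t * g t) / (∫ t in c..d, g t) - v| ≤ δ := by
  have htg : IntervalIntegrable (fun t => t * g t) volume c d := hg.continuousOn_mul continuousOn_id
  have hdev : (∫ t in c..d, t * g t) - v * ∫ t in c..d, g t = ∫ t in c..d, (t - v) * g t := by
    simp only [sub_mul]
    rw [intervalIntegral.integral_sub htg (hg.const_mul v), intervalIntegral.integral_const_mul]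
  have hdiv : (∫ t in c..d, t * g t) / (∫ t in c..d, g t) - v =
      ((∫ t in c..d, t * g t) - v * ∫ t in c..d, g t) / ∫ t in c..d, g t := by
    field_simp
  rw [hdiv, hdev, abs_div, abs_of_pos hpos, div_le_iff₀ hpos]
  calc |∫ t in c..d, (t - v) * g t| ≤ ∫ t in c..d, |(t - v) * g t| :=
        intervalIntegral.abs_integral_le_integral_abs hcd
    _ ≤ ∫ t in c..d, δ * g t := by
        refine intervalIntegral.integral_mono_on hcd ?_ (hg.const_mul δ) fun t ht => ?_
        · simpa only [sub_mul] using (htg.sub (hg.const_mul v)).abs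
        rcases (hg0 t ht).eq_or_lt with hzero | hpos_t
        · simp [← hzero]
        · rw [abs_mul, abs_of_pos hpos_t]
          exact mul_le_mul_of_nonneg_right (hδ t ht hpos_t) hpos_t.le
    _ = δ * ∫ t in c..d, g t := intervalIntegral.integral_const_mul _ _

-- `i - 1` (truncated, `0 - 1 = 0`) and `min (i + 1) n` are the neighbours of `i` clamped to `0..n`,
-- matching the one-sided hats `B_0` and `B_n`.
lemma sub_pred_le_two_mul {y : ℕ → ℝ} {n i : ℕ} {M : ℝ} (hM : ∀ j < n, y (j + 1) - y j ≤ M)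
    (hM0 : 0 ≤ M) (hi : i ≤ n) : y (min (i + 1) n) - y (i - 1) ≤ 2 * M := by
  have hup : y (min (i + 1) n) - y i ≤ M := by
    rcases hi.lt_or_eq with hi | rfl
    · rw [min_eq_left hi]
      exact hM i hi
    · simpa using hM0
  have hdown : y i - y (i - 1) ≤ M := by
    cases i with
    | zero => simpa using hM0
    | succ j => simpa using hM j (by omega)
  linarith

section Nodes

variable {a b : ℝ} {n : ℕ}

lemma nodes_zero (a b : ℝ) (n : ℕ) : nodes a b n 0 = a := by simp [nodes]

lemma nodes_self (hn : n ≠ 0) : nodes a b n n = b := by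
  unfold nodes
  field_simp
  ring

lemma nodes_succ_sub (i : ℕ) : nodes a b n (i + 1) - nodes a b n i = (b - a) / n := by
  unfold nodes
  push_cast
  ring

lemma nodes_strictMono (hab : a < b) (hn : n ≠ 0) : StrictMono (nodes a b n) := by
  intro i j hij
  have : (0 : ℝ) < b - a := sub_pos.2 hab
  unfold nodes
  gcongr

lemma nodes_mem_Icc (hab : a < b) (hn : n ≠ 0) {i : ℕ} (hi : i ≤ n) : nodes a b n i ∈ Icc a b := by
  have h := (nodes_strictMono hab hn).monotone
  constructor
  · simpa only [nodes_zero] using h (Nat.zero_le i)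
  · simpa only [nodes_self hn] using h hi

lemma StrictMonoOn.comp_nodes {f : ℝ → ℝ} (hf : StrictMonoOn f (Icc a b)) (hab : a < b)
    (hn : n ≠ 0) : StrictMonoOn (fun i => f (nodes a b n i)) (Iic n) :=
  hf.comp ((nodes_strictMono hab hn).strictMonoOn _) fun _ hi => nodes_mem_Icc hab hn hi

end Nodes

section HatA

variable {a b : ℝ} {n i : ℕ} {x : ℝ}

lemma hatA_nonneg : 0 ≤ hatA a b n i x := le_max_left _ _

lemma hatA_le_one (hab : a ≤ b) : hatA a b n i x ≤ 1 :=
  max_le zero_le_one (sub_le_self _ (by have := sub_nonneg.2 hab; positivity))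

lemma hatA_pos_iff (hab : a < b) (hn : n ≠ 0) :
    0 < hatA a b n i x ↔ |x - nodes a b n i| < (b - a) / n := by
  have hn' : (0 : ℝ) < n := by positivity
  rw [hatA, lt_max_iff, lt_self_iff_false, false_or, sub_pos, div_mul_eq_mul_div,
    div_lt_one (sub_pos.2 hab), lt_div_iff₀ hn', mul_comm]

lemma exists_hatA_pos (hab : a < b) (hn : n ≠ 0) (hx : x ∈ Icc a b) :
    ∃ i ≤ n, 0 < hatA a b n i x := by
  have hh : 0 < (b - a) / n := div_pos (sub_pos.2 hab) (by positivity)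
  set u := (x - a) / ((b - a) / n)
  have hu : u * ((b - a) / n) = x - a := div_mul_cancel₀ _ hh.ne'
  have hu0 : 0 ≤ u := div_nonneg (sub_nonneg.2 hx.1) hh.le
  refine ⟨⌊u⌋₊, Nat.floor_le_of_le ?_, (hatA_pos_iff hab hn).2 ?_⟩
  · rw [div_le_iff₀ hh, mul_div_cancel₀ _ (Nat.cast_ne_zero.2 hn)]
    linarith [hx.2]
  · have hx_sub : x - nodes a b n ⌊u⌋₊ = (u - ⌊u⌋₊) * ((b - a) / n) := by
      rw [nodes]
      linear_combination -hu
    rw [hx_sub, abs_mul, abs_of_nonneg (sub_nonneg.2 (Nat.floor_le hu0)), abs_of_pos hh]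
    exact mul_lt_of_lt_one_left hh (by linarith [Nat.lt_floor_add_one u])

lemma mem_Icc_nodes_of_hatA_pos (hab : a < b) (hn : n ≠ 0) (hi : i ≤ n) (hx : x ∈ Icc a b)
    (h : 0 < hatA a b n i x) : x ∈ Icc (nodes a b n (i - 1)) (nodes a b n (min (i + 1) n)) := by
  have hdist := abs_lt.1 ((hatA_pos_iff hab hn).1 h)
  constructor
  · cases i with
    | zero => simpa [nodes_zero] using hx.1
    | succ j =>
      rw [Nat.add_sub_cancel]
      linarith [nodes_succ_sub (a := a) (b := b) (n := n) j]
  · rcases hi.lt_or_eq with hi | rfl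
    · rw [min_eq_left hi]
      linarith [nodes_succ_sub (a := a) (b := b) (n := n) i]
    · simpa [nodes_self hn] using hx.2

end HatA

section HatB

variable {n i : ℕ} {y : ℕ → ℝ} {t : ℝ}

lemma hatB_nonneg : 0 ≤ hatB n y i t := by
  unfold hatB
  split_ifs with h₁ h₂
  · exact div_nonneg (sub_nonneg.2 h₁.2.1) (sub_nonneg.2 (h₁.2.1.trans h₁.2.2))
  · exact div_nonneg (sub_nonneg.2 h₂.2.2) (sub_nonneg.2 (h₂.2.1.trans h₂.2.2))
  · exact le_rfl

lemma hatB_le_one : hatB n y i t ≤ 1 := by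
  unfold hatB
  split_ifs with h₁ h₂
  · exact div_le_one_of_le₀ (by linarith [h₁.2.2]) (sub_nonneg.2 (h₁.2.1.trans h₁.2.2))
  · exact div_le_one_of_le₀ (by linarith [h₂.2.1]) (sub_nonneg.2 (h₂.2.1.trans h₂.2.2))
  · exact zero_le_one

lemma measurable_hatB : Measurable (hatB n y i) := by
  unfold hatB
  refine Measurable.ite ?_ (by fun_prop) (Measurable.ite ?_ (by fun_prop) measurable_const) <;>
    simp only [ofPred_and] <;>
    exact (MeasurableSet.const _).inter (measurableSet_Ici.inter measurableSet_Iic)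

lemma mem_Icc_of_hatB_pos (hy : MonotoneOn y (Iic n)) (hi : i ≤ n) (h : 0 < hatB n y i t) :
    t ∈ Icc (y (i - 1)) (y (min (i + 1) n)) := by
  unfold hatB at h
  split_ifs at h with h₁ h₂
  · exact ⟨h₁.2.1, h₁.2.2.trans (hy (mem_Iic.2 hi) (mem_Iic.2 (min_le_right _ _))
      (le_min (Nat.le_succ i) hi))⟩
  · rw [min_eq_left (by omega : i + 1 ≤ n)]
    exact ⟨(hy (mem_Iic.2 (by omega)) (mem_Iic.2 hi) (Nat.sub_le i 1)).trans h₂.2.1, h₂.2.2⟩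
  · exact absurd h (lt_irrefl 0)

lemma hatB_pos (hy : StrictMonoOn y (Iic n)) (hi : i ≤ n)
    (ht : t ∈ Ioo (y (i - 1)) (y (min (i + 1) n))) : 0 < hatB n y i t := by
  unfold hatB
  by_cases hti : t ≤ y i
  · have hi0 : i ≠ 0 := by
      rintro rfl
      exact absurd hti (not_le.2 ht.1)
    rw [if_pos ⟨hi0, ht.1.le, hti⟩]
    exact div_pos (sub_pos.2 ht.1) (sub_pos.2 (hy (mem_Iic.2 (by omega)) (mem_Iic.2 hi) (by omega)))
  · rw [not_le] at hti
    have hin : i ≠ n := by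
      rintro rfl
      exact absurd ht.2 (by simpa using hti.le)
    rw [min_eq_left (by omega : i + 1 ≤ n)] at ht
    rw [if_neg fun h => absurd h.2.2 (not_le.2 hti), if_pos ⟨hin, hti.le, ht.2.le⟩]
    exact div_pos (sub_pos.2 ht.2) (sub_pos.2 (hy (mem_Iic.2 hi) (mem_Iic.2 (by omega)) (by omega)))

end HatB

section Rfun

variable {a b : ℝ} {n : ℕ} {y : ℕ → ℝ} {x t : ℝ}

lemma hatA_mul_hatB_le_Rfun {i : ℕ} (hi : i ≤ n) :
    hatA a b n i x * hatB n y i t ≤ Rfun a b n y x t :=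
  Finset.le_sup' (fun i => hatA a b n i x * hatB n y i t) (Finset.mem_range_succ_iff.2 hi)

lemma Rfun_nonneg : 0 ≤ Rfun a b n y x t :=
  (mul_nonneg hatA_nonneg hatB_nonneg).trans (hatA_mul_hatB_le_Rfun (Nat.zero_le n))

lemma Rfun_le_one (hab : a ≤ b) : Rfun a b n y x t ≤ 1 :=
  Finset.sup'_le _ _ fun _ _ => mul_le_one₀ (hatA_le_one hab) hatB_nonneg hatB_le_one

lemma exists_of_Rfun_pos (h : 0 < Rfun a b n y x t) :
    ∃ i ≤ n, 0 < hatA a b n i x ∧ 0 < hatB n y i t := by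
  obtain ⟨i, hi, hpos⟩ := (Finset.lt_sup'_iff _).1 h
  exact ⟨i, Finset.mem_range_succ_iff.1 hi, pos_of_mul_pos_left hpos hatB_nonneg,
    pos_of_mul_pos_right hpos hatA_nonneg⟩

lemma intervalIntegrable_Rfun (hab : a ≤ b) (c d : ℝ) :
    IntervalIntegrable (Rfun a b n y x) volume c d := by
  have hmeas : Measurable (Rfun a b n y x) :=
    Finset.measurable_range_sup'' fun _ _ => measurable_const.mul measurable_hatB
  refine (intervalIntegrable_const (c := (1 : ℝ))).mono_fun' hmeas.aestronglyMeasurable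
    (ae_of_all _ fun _ => ?_)
  simpa only [Real.norm_of_nonneg Rfun_nonneg] using Rfun_le_one hab

lemma integral_Rfun_pos (hab : a < b) (hn : n ≠ 0) (hy : StrictMonoOn y (Iic n))
    (hx : x ∈ Icc a b) : 0 < ∫ t in y 0..y n, Rfun a b n y x t := by
  obtain ⟨i, hi, hA⟩ := exists_hatA_pos hab hn hx
  have hlo : y 0 ≤ y (i - 1) :=
    hy.monotoneOn (mem_Iic.2 (Nat.zero_le n)) (mem_Iic.2 (by omega)) (Nat.zero_le _)
  have hhi : y (min (i + 1) n) ≤ y n :=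
    hy.monotoneOn (mem_Iic.2 (min_le_right _ _)) (mem_Iic.2 le_rfl) (min_le_right _ _)
  have hlt : y (i - 1) < y (min (i + 1) n) :=
    hy (mem_Iic.2 (by omega)) (mem_Iic.2 (min_le_right _ _)) (by omega)
  calc 0 < ∫ t in y (i - 1)..y (min (i + 1) n), Rfun a b n y x t :=
        intervalIntegral.intervalIntegral_pos_of_pos_on (intervalIntegrable_Rfun hab.le _ _)
          (fun t ht => (mul_pos hA (hatB_pos hy hi ht)).trans_le (hatA_mul_hatB_le_Rfun hi)) hlt
    _ ≤ ∫ t in y 0..y n, Rfun a b n y x t :=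
        intervalIntegral.integral_mono_interval hlo hlt.le hhi
          (ae_of_all _ fun _ => Rfun_nonneg) (intervalIntegrable_Rfun hab.le _ _)

end Rfun

lemma abs_sub_le_of_Rfun_pos {a b M x t : ℝ} {n : ℕ} {f : ℝ → ℝ} (hab : a < b) (hn : n ≠ 0)
    (hf : MonotoneOn f (Icc a b)) (hM : ∀ j < n, f (nodes a b n (j + 1)) - f (nodes a b n j) ≤ M)
    (hM0 : 0 ≤ M) (hx : x ∈ Icc a b) (ht : 0 < Rfun a b n (fun i => f (nodes a b n i)) x t) :
    |t - f x| ≤ 2 * M := by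
  obtain ⟨i, hi, hA, hB⟩ := exists_of_Rfun_pos ht
  have hnodes : MapsTo (nodes a b n) (Iic n) (Icc a b) := fun _ hj => nodes_mem_Icc hab hn hj
  have hy : MonotoneOn (fun j => f (nodes a b n j)) (Iic n) :=
    hf.comp ((nodes_strictMono hab hn).monotone.monotoneOn _) hnodes
  have htI := mem_Icc_of_hatB_pos hy hi hB
  have hxI := mem_Icc_nodes_of_hatA_pos hab hn hi hx hA
  have hfx_lo : f (nodes a b n (i - 1)) ≤ f x := hf (hnodes (mem_Iic.2 (by omega))) hx hxI.1
  have hfx_hi : f x ≤ f (nodes a b n (min (i + 1) n)) :=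
    hf hx (hnodes (mem_Iic.2 (min_le_right _ _))) hxI.2
  have hwidth := sub_pred_le_two_mul (y := fun j => f (nodes a b n j)) hM hM0 hi
  rw [abs_le]
  constructor <;> linarith [htI.1, htI.2]

theorem stmt_4_general (a b : ℝ) (hab : a < b) (f : ℝ → ℝ)
    (hmono : StrictMonoOn f (Set.Icc a b))
    (n : ℕ) (hn : 1 ≤ n) :
    ∀ x ∈ Set.Icc a b,
      |(∫ t in f a..f b, t * Rfun a b n (fun i => f (nodes a b n i)) x t) /
          (∫ t in f a..f b, Rfun a b n (fun i => f (nodes a b n i)) x t) - f x| ≤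
        3 * (Finset.range n).sup'
            (Finset.nonempty_range_iff.mpr (Nat.one_le_iff_ne_zero.mp hn))
            (fun i => f (nodes a b n (i + 1)) - f (nodes a b n i)) := by
  intro x hx
  have hn0 : n ≠ 0 := Nat.one_le_iff_ne_zero.mp hn
  set M := (Finset.range n).sup' (Finset.nonempty_range_iff.mpr hn0)
    (fun i => f (nodes a b n (i + 1)) - f (nodes a b n i))
  have hM : ∀ j < n, f (nodes a b n (j + 1)) - f (nodes a b n j) ≤ M := fun j hj =>
    Finset.le_sup' (fun i => f (nodes a b n (i + 1)) - f (nodes a b n i)) (Finset.mem_range.2 hj)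
  have hy := hmono.comp_nodes hab hn0
  have hM0 : 0 ≤ M := (sub_nonneg.2 (hy.monotoneOn (mem_Iic.2 (Nat.zero_le n)) (mem_Iic.2 hn)
    zero_le_one)).trans (hM 0 hn)
  have hc : f a = f (nodes a b n 0) := by rw [nodes_zero]
  have hd : f b = f (nodes a b n n) := by rw [nodes_self hn0]
  rw [hc, hd]
  calc _ ≤ 2 * M :=
        abs_integral_mul_div_integral_sub_le (hy.monotoneOn (mem_Iic.2 (Nat.zero_le n))
          (mem_Iic.2 le_rfl) (Nat.zero_le n)) (intervalIntegrable_Rfun hab.le _ _)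
          (fun _ _ => Rfun_nonneg) (integral_Rfun_pos hab hn0 hy hx)
          fun _ _ ht => abs_sub_le_of_Rfun_pos hab hn0 hmono.monotoneOn hM hM0 hx ht
    _ ≤ 3 * M := by linarith

/-- For continuous strictly increasing `f` on `[a, b]` and `n ≥ 1`, the
conditional expectation `E_n(x) = (∫_c^d t R_n(x,t) dt)/(∫_c^d R_n(x,t) dt)` satisfies
`|E_n(x) − f(x)| ≤ 3 max_{1 ≤ i ≤ n} (y_i − y_{i−1})` for every `x ∈ [a, b]`. -/
theorem stmt_4 (a b : ℝ) (hab : a < b) (f : ℝ → ℝ)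
    (hf : ContinuousOn f (Set.Icc a b)) (hmono : StrictMonoOn f (Set.Icc a b))
    (n : ℕ) (hn : 1 ≤ n) :
    ∀ x ∈ Set.Icc a b,
      |(∫ t in f a..f b, t * Rfun a b n (fun i => f (nodes a b n i)) x t) /
          (∫ t in f a..f b, Rfun a b n (fun i => f (nodes a b n i)) x t) - f x| ≤
        3 * (Finset.range n).sup'
            (Finset.nonempty_range_iff.mpr (Nat.one_le_iff_ne_zero.mp hn))
            (fun i => f (nodes a b n (i + 1)) - f (nodes a b n i)) :=
  stmt_4_general a b hab f hmono n hn
end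

section
/- Let f : [0, 1] → ℝ be continuous and strictly increasing, with c = f(0) and d = f(1). For n ≥ 1 let m = 2n, x_i = i/m, y_i = f(x_i) (i = 0, …, m). Define A_i : [0, 1] → ℝ by: A_i(x) = sin²(nπx) if i is odd and x ∈ [(i−1)/m, (i+1)/m], A_i(x) = cos²(nπx) if i is even and x ∈ [max(0, (i−1)/m), min(1, (i+1)/m)], and A_i(x) = 0 otherwise. Define B_i : [c, d] → ℝ by: B_0(y) = cos²(π(y − y_0)/(2(y_1 − y_0))) for y ∈ [y_0, y_1] and 0 otherwise; for 1 ≤ i ≤ m−1, B_i(y) = sin²(π(y − y_{i−1})/(2(y_i − y_{i−1}))) for y ∈ [y_{i−1}, y_i], B_i(y) = cos²(π(y − y_i)/(2(y_{i+1} − y_i))) for y ∈ (y_i, y_{i+1}], and 0 otherwise; B_m(y) = sin²(π(y − y_{m−1})/(2(y_m − y_{m−1}))) for y ∈ [y_{m−1}, y_m] and 0 otherwise. Set μ_n(x, y) = max_{0≤i≤m} A_i(x)·B_i(y) and f_n(x) = (∫_c^d y·μ_n(x, y) dy)/(∫_c^d μ_n(x, y) dy). Then (f_n) converges uniformly to f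 on [0, 1]: for every ε > 0 there exists N such that for all n > N and all x ∈ [0, 1], |f_n(x) − f(x)| < ε. -/
open scoped Classical

/-- The base function `A_i` on `[0, 1]` built from the essence probability densities of the
Adam and Eve wave functions at quantum number `n` (with `m = 2n`): `A_i(x) = sin²(nπx)` for
odd `i` on `[(i−1)/m, (i+1)/m]`, `A_i(x) = cos²(nπx)` for even `i` on
`[max 0 ((i−1)/m), min 1 ((i+1)/m)]`, and `0` otherwise. -/
noncomputable def qA (n i : ℕ) (x : ℝ) : ℝ :=
  if i % 2 = 1 then
    if ((i : ℝ) - 1) / (2 * (n : ℝ)) ≤ x ∧ x ≤ ((i : ℝ) + 1) / (2 * (n : ℝ)) then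
      Real.sin ((n : ℝ) * Real.pi * x) ^ 2
    else 0
  else
    if max 0 (((i : ℝ) - 1) / (2 * (n : ℝ))) ≤ x ∧
        x ≤ min 1 (((i : ℝ) + 1) / (2 * (n : ℝ))) then
      Real.cos ((n : ℝ) * Real.pi * x) ^ 2
    else 0

/-- The base function `B_i` on `[c, d]` built from the ground-state probability essence
wave functions of the descendant particles over the subintervals `[y (i−1), y i]`
(with `m = 2n`): `B_0` is the falling `cos²` piece on `[y 0, y 1]`, `B_m` is the rising
`sin²` piece on `[y (m−1), y m]`, and for `1 ≤ i ≤ m−1`, `B_i` rises as `sin²` on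
`[y (i−1), y i]` and falls as `cos²` on `(y i, y (i+1)]`, being `0` otherwise. -/
noncomputable def qB (n : ℕ) (y : ℕ → ℝ) (i : ℕ) (t : ℝ) : ℝ :=
  if i = 0 then
    if y 0 ≤ t ∧ t ≤ y 1 then
      Real.cos (Real.pi * (t - y 0) / (2 * (y 1 - y 0))) ^ 2
    else 0
  else if i = 2 * n then
    if y (2 * n - 1) ≤ t ∧ t ≤ y (2 * n) then
      Real.sin (Real.pi * (t - y (2 * n - 1)) / (2 * (y (2 * n) - y (2 * n - 1)))) ^ 2
    else 0
  else
    if y (i - 1) ≤ t ∧ t ≤ y i then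
      Real.sin (Real.pi * (t - y (i - 1)) / (2 * (y i - y (i - 1)))) ^ 2
    else if y i < t ∧ t ≤ y (i + 1) then
      Real.cos (Real.pi * (t - y i) / (2 * (y (i + 1) - y i))) ^ 2
    else 0

/-- The joint function `μ_n(x, t) = max_{0 ≤ i ≤ 2n} A_i(x) B_i(t)`. -/
noncomputable def mufun (n : ℕ) (y : ℕ → ℝ) (x t : ℝ) : ℝ :=
  (Finset.range (2 * n + 1)).sup' Finset.nonempty_range_add_one
    (fun i => qA n i x * qB n y i t)

/-!
If `A_i(x) ≠ 0` then `|2n x - i| ≤ 1`, and if `B_i(t) ≠ 0` then `t` lies between the nodes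
`y_{i-1}` and `y_{i+1}`, a window that also contains `f x` and has parameter width `1/n`.
So `μ_n(x, ·)` is supported where `|t - f x|` is bounded by the oscillation of `f` at scale `1/n`.
On the cell `[k/2n, (k+1)/2n]` containing `x` one has `A_k(x) + A_{k+1}(x) = 1`, so some
`A_i(x)` is positive and `μ_n(x, ·)` has positive mass. Hence `f_n(x)` is an average of `t`
against a positive weight concentrated near `f x`, and uniform continuity of `f` concludes.
-/

open Real MeasureTheory Set

theorem abs_integral_mul_div_integral_sub_le_s16 {μ : Measure ℝ} {g : ℝ → ℝ} {a η : ℝ}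
    (hg : Integrable g μ) (htg : Integrable (fun t => t * g t) μ) (hg0 : 0 ≤ g)
    (hpos : 0 < ∫ t, g t ∂μ) (hsupp : ∀ t, g t ≠ 0 → |t - a| ≤ η) :
    |(∫ t, t * g t ∂μ) / (∫ t, g t ∂μ) - a| ≤ η := by
  have hcentre : (∫ t, t * g t ∂μ) - a * ∫ t, g t ∂μ = ∫ t, (t - a) * g t ∂μ := by
    rw [← integral_const_mul a g, ← integral_sub htg (hg.const_mul a)]
    simp only [sub_mul]
  have hbound : |∫ t, (t - a) * g t ∂μ| ≤ η * ∫ t, g t ∂μ := by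
    rw [← Real.norm_eq_abs, ← integral_const_mul η g]
    refine norm_integral_le_of_norm_le (hg.const_mul η) (ae_of_all _ fun t => ?_)
    by_cases ht : g t = 0
    · simp [ht]
    · rw [norm_mul, Real.norm_eq_abs, Real.norm_eq_abs, abs_of_nonneg (hg0 t)]
      exact mul_le_mul_of_nonneg_right (hsupp t ht) (hg0 t)
  rwa [div_sub' hpos.ne', abs_div, abs_of_pos hpos, div_le_iff₀ hpos, mul_comm _ a, hcentre]

theorem abs_intervalIntegral_mul_div_integral_sub_le {g : ℝ → ℝ} {c d a η : ℝ}
    (hg : IntervalIntegrable g volume c d) (hg0 : 0 ≤ g) (hpos : 0 < ∫ t in c..d, g t)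
    (hsupp : ∀ t, g t ≠ 0 → |t - a| ≤ η) :
    |(∫ t in c..d, t * g t) / (∫ t in c..d, g t) - a| ≤ η := by
  have hcd : c ≤ d := by
    by_contra! hdc
    have := intervalIntegral.integral_nonneg (μ := volume) hdc.le fun t _ => hg0 t
    rw [intervalIntegral.integral_symm] at hpos
    linarith
  rw [intervalIntegral.integral_of_le hcd] at hpos ⊢
  rw [intervalIntegral.integral_of_le hcd]
  exact abs_integral_mul_div_integral_sub_le_s16 hg.1 (hg.continuousOn_mul continuousOn_id).1 hg0
    hpos hsupp

theorem intervalIntegral_pos_of_pos_on_Ioo {g : ℝ → ℝ} {c d p q : ℝ}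
    (hg : IntervalIntegrable g volume c d) (hg0 : ∀ t ∈ Icc c d, 0 ≤ g t)
    (hcp : c ≤ p) (hpq : p < q) (hqd : q ≤ d) (hpos : ∀ t ∈ Ioo p q, 0 < g t) :
    0 < ∫ t in c..d, g t := by
  have hcd : c ≤ d := by linarith
  have hsub : uIcc p q ⊆ uIcc c d := uIcc_subset_uIcc
    (by rw [uIcc_of_le hcd]; exact ⟨hcp, by linarith⟩)
    (by rw [uIcc_of_le hcd]; exact ⟨by linarith, hqd⟩)
  refine (intervalIntegral.intervalIntegral_pos_of_pos_on (hg.mono_set hsub) hpos hpq).trans_le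
    (intervalIntegral.integral_mono_interval hcp hpq.le hqd ?_ hg)
  exact (ae_restrict_mem measurableSet_Ioc).mono fun t ht => hg0 t (Ioc_subset_Icc_self ht)

theorem quarter_wave_mem_Ioo {p q t : ℝ} (ht : t ∈ Ioo p q) :
    π * (t - p) / (2 * (q - p)) ∈ Ioo 0 (π / 2) := by
  obtain ⟨hpt, htq⟩ := ht
  constructor
  · have := pi_pos
    apply div_pos <;> nlinarith
  · rw [div_lt_div_iff₀ (by linarith) two_pos]
    nlinarith [pi_pos]

theorem sin_sq_quarter_wave_pos {p q t : ℝ} (ht : t ∈ Ioo p q) :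
    0 < sin (π * (t - p) / (2 * (q - p))) ^ 2 := by
  obtain ⟨h0, hπ⟩ := quarter_wave_mem_Ioo ht
  have := sin_pos_of_pos_of_lt_pi h0 (by linarith [pi_pos])
  positivity

theorem cos_sq_quarter_wave_pos {p q t : ℝ} (ht : t ∈ Ioo p q) :
    0 < cos (π * (t - p) / (2 * (q - p))) ^ 2 := by
  obtain ⟨h0, hπ⟩ := quarter_wave_mem_Ioo ht
  have := cos_pos_of_mem_Ioo ⟨by linarith, hπ⟩
  positivity

theorem exists_nat_lt_mem_Icc_div {m : ℕ} (hm : 0 < m) {x : ℝ} (hx : x ∈ Icc 0 1) :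
    ∃ k < m, x ∈ Icc ((k : ℝ) / m) (((k : ℝ) + 1) / m) := by
  have hm' : (0 : ℝ) < m := by exact_mod_cast hm
  rcases hx.2.lt_or_eq with hx1 | rfl
  · refine ⟨⌊x * m⌋₊, ?_, ?_, ?_⟩
    · exact (Nat.floor_lt (mul_nonneg hx.1 hm'.le)).2 (by nlinarith)
    · rw [div_le_iff₀ hm']; exact Nat.floor_le (by nlinarith [hx.1])
    · rw [le_div_iff₀ hm']; exact (Nat.lt_floor_add_one _).le
  · refine ⟨m - 1, by omega, ?_, ?_⟩
    · rw [div_le_one hm']; exact_mod_cast Nat.sub_le m 1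
    · rw [Nat.cast_sub hm, le_div_iff₀ hm']; simp

theorem mapsTo_natCast_div_Icc (n : ℕ) :
    MapsTo (fun k : ℕ => (k : ℝ) / (2 * n)) (Iic (2 * n)) (Icc 0 1) :=
  fun k hk => ⟨by positivity, div_le_one_of_le₀ (by exact_mod_cast hk) (by positivity)⟩

theorem strictMono_natCast_div {n : ℕ} (hn : 0 < n) :
    StrictMono (fun k : ℕ => (k : ℝ) / (2 * n)) :=
  fun _ _ h => div_lt_div_of_pos_right (by exact_mod_cast h) (by positivity)

section qA

variable {n i : ℕ} {x : ℝ}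

theorem qA_nonneg : 0 ≤ qA n i x := by
  unfold qA; split_ifs <;> positivity

theorem qA_le_one : qA n i x ≤ 1 := by
  unfold qA
  split_ifs <;> first | exact sin_sq_le_one _ | exact cos_sq_le_one _ | exact zero_le_one

theorem mem_Icc_of_qA_ne_zero (h : qA n i x ≠ 0) :
    x ∈ Icc (((i : ℝ) - 1) / (2 * n)) (((i : ℝ) + 1) / (2 * n)) := by
  unfold qA at h
  split_ifs at h with _ hbr hbr'
  · exact hbr
  · exact absurd rfl h
  · exact ⟨(le_max_right _ _).trans hbr'.1, hbr'.2.trans (min_le_right _ _)⟩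
  · exact absurd rfl h

theorem qA_eq_of_mem_Icc (hx : x ∈ Icc 0 1)
    (hi : x ∈ Icc (((i : ℝ) - 1) / (2 * n)) (((i : ℝ) + 1) / (2 * n))) :
    qA n i x = if i % 2 = 1 then sin (n * π * x) ^ 2 else cos (n * π * x) ^ 2 := by
  unfold qA
  split_ifs with _ hbr hbr'
  · rfl
  · exact absurd hi hbr
  · rfl
  · exact absurd ⟨max_le hx.1 hi.1, le_min hx.2 hi.2⟩ hbr'

-- One of `k`, `k + 1` is odd, so the two terms are `sin²` and `cos²` of the same angle.
theorem qA_add_qA_succ {k : ℕ} (hx : x ∈ Icc 0 1)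
    (hk : x ∈ Icc ((k : ℝ) / (2 * n)) (((k : ℝ) + 1) / (2 * n))) :
    qA n k x + qA n (k + 1) x = 1 := by
  have hn : (0 : ℝ) ≤ 2 * n := by positivity
  rw [qA_eq_of_mem_Icc hx ⟨(div_le_div_of_nonneg_right (by linarith) hn).trans hk.1, hk.2⟩,
    qA_eq_of_mem_Icc hx ⟨by push_cast; simpa using hk.1,
      hk.2.trans (div_le_div_of_nonneg_right (by push_cast; linarith) hn)⟩]
  split_ifs <;> first | omega | exact sin_sq_add_cos_sq _ | exact cos_sq_add_sin_sq _

end qA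

theorem exists_qA_pos {n : ℕ} (hn : 0 < n) {x : ℝ} (hx : x ∈ Icc 0 1) :
    ∃ i ≤ 2 * n, 0 < qA n i x := by
  obtain ⟨k, hk, hxk⟩ := exists_nat_lt_mem_Icc_div (m := 2 * n) (by omega) hx
  push_cast at hxk
  have hsum := qA_add_qA_succ hx hxk
  by_cases h : 0 < qA n k x
  · exact ⟨k, by omega, h⟩
  · exact ⟨k + 1, by omega, by linarith [qA_nonneg (n := n) (i := k) (x := x)]⟩

section qB

variable {n : ℕ} {y : ℕ → ℝ} {i : ℕ} {t : ℝ}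

theorem qB_nonneg : 0 ≤ qB n y i t := by
  unfold qB; split_ifs <;> positivity

theorem qB_le_one : qB n y i t ≤ 1 := by
  unfold qB
  split_ifs <;> first | exact sin_sq_le_one _ | exact cos_sq_le_one _ | exact zero_le_one

theorem measurable_qB : Measurable (qB n y i) := by
  unfold qB
  repeat' apply Measurable.ite
  all_goals first | fun_prop | measurability

-- For `i = 0` the truncated `i - 1` makes the window start at `y 0`.
theorem mem_Icc_of_qB_ne_zero (hn : 0 < n) (hy : MonotoneOn y (Iic (2 * n))) (hi : i ≤ 2 * n)
    (h : qB n y i t ≠ 0) : t ∈ Icc (y (i - 1)) (y (min (i + 1) (2 * n))) := by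
  have hy' : ∀ j ≤ 2 * n, ∀ k ≤ 2 * n, j ≤ k → y j ≤ y k := fun _ hj _ hk => hy hj hk
  unfold qB at h
  split_ifs at h with h0 hbr hm hbr hbr hbr'
  · subst h0; rwa [show min (0 + 1) (2 * n) = 1 by omega]
  · exact absurd rfl h
  · subst hm; rwa [show min (2 * n + 1) (2 * n) = 2 * n by omega]
  · exact absurd rfl h
  · rw [show min (i + 1) (2 * n) = i + 1 by omega]
    exact ⟨hbr.1, hbr.2.trans (hy' _ hi _ (by omega) (by omega))⟩
  · rw [show min (i + 1) (2 * n) = i + 1 by omega]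
    exact ⟨(hy' _ (by omega) _ hi (by omega)).trans hbr'.1.le, hbr'.2⟩
  · exact absurd rfl h

-- `B_0` is positive on its falling piece, every other `B_i` on its rising piece; either way
-- on the cell that ends at `y (max i 1)`.
theorem qB_pos (ht : t ∈ Ioo (y (max i 1 - 1)) (y (max i 1))) : 0 < qB n y i t := by
  unfold qB
  split_ifs with h0 hbr hm hbr hbr
  · subst h0; exact cos_sq_quarter_wave_pos ht
  · subst h0; exact absurd ⟨ht.1.le, ht.2.le⟩ hbr
  all_goals rw [max_eq_left (by omega)] at ht
  · subst hm; exact sin_sq_quarter_wave_pos ht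
  · subst hm; exact absurd ⟨ht.1.le, ht.2.le⟩ hbr
  · exact sin_sq_quarter_wave_pos ht
  all_goals exact absurd ⟨ht.1.le, ht.2.le⟩ hbr

end qB

section mufun

variable {n : ℕ} {y : ℕ → ℝ} {x t : ℝ}

theorem qA_mul_qB_le_mufun {i : ℕ} (hi : i ≤ 2 * n) : qA n i x * qB n y i t ≤ mufun n y x t :=
  Finset.le_sup' (fun i => qA n i x * qB n y i t) (Finset.mem_range.2 (by omega))

theorem mufun_nonneg : 0 ≤ mufun n y x t :=
  (mul_nonneg qA_nonneg qB_nonneg).trans (qA_mul_qB_le_mufun (Nat.zero_le _))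

theorem mufun_le_one : mufun n y x t ≤ 1 :=
  Finset.sup'_le _ _ fun _ _ => mul_le_one₀ qA_le_one qB_nonneg qB_le_one

theorem exists_of_mufun_ne_zero (h : mufun n y x t ≠ 0) :
    ∃ i ≤ 2 * n, qA n i x ≠ 0 ∧ qB n y i t ≠ 0 := by
  obtain ⟨i, hi, hmax⟩ := Finset.exists_mem_eq_sup' Finset.nonempty_range_add_one
    (fun i => qA n i x * qB n y i t)
  rw [mufun, hmax] at h
  exact ⟨i, Nat.lt_succ_iff.1 (Finset.mem_range.1 hi), left_ne_zero_of_mul h,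
    right_ne_zero_of_mul h⟩

theorem intervalIntegrable_mufun (a b : ℝ) :
    IntervalIntegrable (mufun n y x) volume a b := by
  have hmeas : Measurable (mufun n y x) := by
    have : mufun n y x = (Finset.range (2 * n + 1)).sup' Finset.nonempty_range_add_one
        (fun i t => qA n i x * qB n y i t) := by
      ext t; rw [mufun, Finset.sup'_apply]
    rw [this]
    exact Finset.measurable_sup' _ fun i _ => measurable_qB.const_mul _
  exact (intervalIntegrable_const (c := 1)).mono_fun' hmeas.aestronglyMeasurable
    (ae_of_all _ fun t => (Real.norm_of_nonneg mufun_nonneg).trans_le mufun_le_one)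

theorem integral_mufun_pos (hn : 0 < n) (hy : StrictMonoOn y (Iic (2 * n)))
    (hx : x ∈ Icc 0 1) :
    0 < ∫ t in y 0..y (2 * n), mufun n y x t := by
  obtain ⟨i, hi, hA⟩ := exists_qA_pos hn hx
  set j := max i 1
  have hj : j ≤ 2 * n := max_le hi (by omega)
  have hmem : ∀ k ≤ 2 * n, k ∈ Iic (2 * n) := fun _ => mem_Iic.2
  refine intervalIntegral_pos_of_pos_on_Ioo (p := y (j - 1)) (q := y j)
    (intervalIntegrable_mufun _ _) (fun _ _ => mufun_nonneg)
    (hy.monotoneOn (hmem 0 (by omega)) (hmem _ (by omega)) (Nat.zero_le _))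
    (hy (hmem _ (by omega)) (hmem _ hj) (by omega))
    (hy.monotoneOn (hmem _ hj) (hmem _ le_rfl) hj) fun t ht => ?_
  exact (mul_pos hA (qB_pos ht)).trans_le (qA_mul_qB_le_mufun hi)

end mufun

theorem abs_sub_le_of_mufun_ne_zero {f : ℝ → ℝ} {n : ℕ} {x t η : ℝ}
    (hf : MonotoneOn f (Icc 0 1)) (hn : 0 < n) (hx : x ∈ Icc 0 1)
    (hη : ∀ u ∈ Icc (0 : ℝ) 1, ∀ v ∈ Icc (0 : ℝ) 1, dist u v ≤ 1 / n → dist (f u) (f v) ≤ η)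
    (h : mufun n (fun i => f (i / (2 * n))) x t ≠ 0) : |t - f x| ≤ η := by
  obtain ⟨i, hi, hA, hB⟩ := exists_of_mufun_ne_zero h
  have hm : (0 : ℝ) < 2 * n := by positivity
  have hxi := mem_Icc_of_qA_ne_zero hA
  set a : ℝ := ((i - 1 : ℕ) : ℝ) / (2 * n)
  set b : ℝ := ((min (i + 1) (2 * n) : ℕ) : ℝ) / (2 * n)
  have ha : a ∈ Icc 0 1 := mapsTo_natCast_div_Icc n (mem_Iic.2 (by omega))
  have hb : b ∈ Icc 0 1 := mapsTo_natCast_div_Icc n (mem_Iic.2 (min_le_right _ _))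
  have hax : a ≤ x := by
    rcases Nat.eq_zero_or_pos i with rfl | hi0
    · simpa [a] using hx.1
    · simpa [a, Nat.cast_sub hi0] using hxi.1
  have hxb : x ≤ b := by
    rw [le_div_iff₀ hm, Nat.cast_min]
    push_cast
    exact le_min ((le_div_iff₀ hm).1 hxi.2) (by nlinarith [hx.2])
  have hba : dist b a ≤ 1 / n := by
    have hnum : ((min (i + 1) (2 * n) : ℕ) : ℝ) ≤ ((i - 1 : ℕ) : ℝ) + 2 := by
      exact_mod_cast (show min (i + 1) (2 * n) ≤ i - 1 + 2 by omega)
    rw [Real.dist_eq, abs_of_nonneg (by linarith), ← sub_div, div_le_iff₀ hm]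
    field_simp
    linarith
  have ht : t ∈ Icc (f a) (f b) :=
    mem_Icc_of_qB_ne_zero hn (hf.comp ((strictMono_natCast_div hn).monotone.monotoneOn _)
      (mapsTo_natCast_div_Icc n)) hi hB
  have hfx : f x ∈ Icc (f a) (f b) := ⟨hf ha hx hax, hf hx hb hxb⟩
  calc |t - f x| ≤ f b - f a :=
        abs_sub_le_iff.2 ⟨by linarith [ht.2, hfx.1], by linarith [ht.1, hfx.2]⟩
    _ ≤ dist (f b) (f a) := le_abs_self _
    _ ≤ η := hη b hb a ha hba

/-- the paper's Theorem 4.1, strictly monotone case. For continuous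
strictly increasing `f` on `[0, 1]` with `c = f 0`, `d = f 1`, and `y i = f (i/(2n))`, the
conditional mathematical expectations
`f_n(x) = (∫_c^d t μ_n(x,t) dt)/(∫_c^d μ_n(x,t) dt)` built from the quantum-mechanical
wave functions converge uniformly to `f` on `[0, 1]` as the quantum number `n → ∞`. -/
theorem stmt_16 (f : ℝ → ℝ)
    (hf : ContinuousOn f (Set.Icc (0 : ℝ) 1))
    (hmono : StrictMonoOn f (Set.Icc (0 : ℝ) 1)) :
    ∀ ε > 0, ∃ N : ℕ, ∀ n > N, ∀ x ∈ Set.Icc (0 : ℝ) 1,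
      |(∫ t in (f 0)..(f 1), t * mufun n (fun i => f ((i : ℝ) / (2 * (n : ℝ)))) x t) /
          (∫ t in (f 0)..(f 1), mufun n (fun i => f ((i : ℝ) / (2 * (n : ℝ)))) x t) - f x|
        < ε := by
  intro ε hε
  obtain ⟨δ, hδ, hfδ⟩ := Metric.uniformContinuousOn_iff.1
    (isCompact_Icc.uniformContinuousOn_of_continuous hf) (ε / 2) (half_pos hε)
  obtain ⟨N, hN⟩ := exists_nat_gt δ⁻¹
  refine ⟨N, fun n hn x hx => ?_⟩
  have hn0 : 0 < n := by omega
  have hmesh : 1 / (n : ℝ) < δ := by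
    rw [one_div, inv_lt_comm₀ (by positivity) hδ]
    exact hN.trans (by exact_mod_cast hn)
  have hsupp := fun t => abs_sub_le_of_mufun_ne_zero (t := t) hmono.monotoneOn hn0 hx
    fun u hu v hv huv => (hfδ u hu v hv (huv.trans_lt hmesh)).le
  have hy : StrictMonoOn (fun i : ℕ => f (i / (2 * n))) (Iic (2 * n)) :=
    hmono.comp ((strictMono_natCast_div hn0).strictMonoOn _) (mapsTo_natCast_div_Icc n)
  have hden := integral_mufun_pos hn0 hy hx
  have hends : ((0 : ℕ) : ℝ) / (2 * n) = 0 ∧ ((2 * n : ℕ) : ℝ) / (2 * n) = 1 :=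
    ⟨by simp, by push_cast; field_simp⟩
  beta_reduce at hden
  rw [hends.1, hends.2] at hden
  calc _ ≤ ε / 2 := abs_intervalIntegral_mul_div_integral_sub_le (intervalIntegrable_mufun _ _)
        (fun _ => mufun_nonneg) hden hsupp
    _ < ε := half_lt_self hε
end
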